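/- For every n ≥ 4, the diameter of the cubical staircase graph CS_n equals 3(n−3). -/

import Mathlib

/-!
The graph distance of `CS n` is the `ℓ¹` distance of the coordinate triples: an edge changes the
`ℓ¹` distance to any vertex by at most one, and from any vertex there is a neighbour inside the
staircase that is `ℓ¹`-closer to a given target. Each coordinate ranges over an interval of length
`n - 3`, so the `ℓ¹` distance is at most `3 (n - 3)`, and the corners `(1, 1, n - 2)` and
`(n - 2, n - 2, 1)` attain this bound.
-/

open SimpleGraph Finset

/-- The `k`-token graph of a graph `G`: vertices are `k`-element subsets of the vertex set,
two subsets adjacent iff their symmetric difference is `{x, y}` with `xy` an edge of `G`. -/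
def tokenGraph {V : Type*} [DecidableEq V] (G : SimpleGraph V) (k : ℕ) :
    SimpleGraph {s : Finset V // s.card = k} where
  Adj A B := ∃ x y, G.Adj x y ∧ symmDiff A.1 B.1 = {x, y}
  symm := ⟨by
    rintro A B ⟨x, y, hxy, h⟩
    exact ⟨x, y, hxy, by rwa [symmDiff_comm]⟩⟩
  loopless := ⟨by
    rintro A ⟨x, y, hxy, h⟩
    rw [symmDiff_self] at h
    exact (Finset.insert_nonempty x {y}).ne_empty (by simpa using h.symm)⟩

/-- Vertex set of the cubical staircase graph `CS n` (1-indexed coordinates). -/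
abbrev CSVert (n : ℕ) :=
  {v : ℕ × ℕ × ℕ // 1 ≤ v.1 ∧ v.1 ≤ n - 2 ∧ 1 ≤ v.2.1 ∧ v.2.1 ≤ v.1 ∧
    1 ≤ v.2.2 ∧ v.2.2 ≤ n - 1 - v.1}

/-- The cubical staircase graph `CS n`: two vertices are adjacent iff they differ in exactly
one coordinate, by exactly 1. -/
def CS (n : ℕ) : SimpleGraph (CSVert n) where
  Adj a b :=
    (a.1.1 = b.1.1 ∧ a.1.2.1 = b.1.2.1 ∧ (a.1.2.2 + 1 = b.1.2.2 ∨ b.1.2.2 + 1 = a.1.2.2)) ∨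
    (a.1.1 = b.1.1 ∧ a.1.2.2 = b.1.2.2 ∧ (a.1.2.1 + 1 = b.1.2.1 ∨ b.1.2.1 + 1 = a.1.2.1)) ∨
    (a.1.2.1 = b.1.2.1 ∧ a.1.2.2 = b.1.2.2 ∧ (a.1.1 + 1 = b.1.1 ∨ b.1.1 + 1 = a.1.1))
  symm := ⟨by intro a b h; omega⟩
  loopless := ⟨by intro a h; omega⟩

/-- Disjoint union of an arbitrary family of graphs. -/
def sigmaGraph {ι : Type*} {V : ι → Type*} (G : ∀ i, SimpleGraph (V i)) :
    SimpleGraph (Σ i, V i) where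
  Adj a b := ∃ (i : ι) (x y : V i), (G i).Adj x y ∧ a = ⟨i, x⟩ ∧ b = ⟨i, y⟩
  symm := ⟨by rintro a b ⟨i, x, y, h, rfl, rfl⟩; exact ⟨i, y, x, h.symm, rfl, rfl⟩⟩
  loopless := ⟨by
    rintro a ⟨i, x, y, h, rfl, he⟩
    exact h.ne (by simpa using he)⟩

namespace SimpleGraph

variable {V : Type*} {G : SimpleGraph V} {d : V → V → ℕ}

theorem le_length_of_le_add_one_of_adj (hself : ∀ v, d v v = 0)
    (hadj : ∀ u w v, G.Adj u w → d u v ≤ d w v + 1) {u v : V} (p : G.Walk u v) :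
    d u v ≤ p.length := by
  induction p with
  | nil => simp [hself]
  | cons h p ih => exact (hadj _ _ _ h).trans (by rw [Walk.length_cons]; omega)

theorem exists_walk_length_le_of_exists_adj_lt
    (hstep : ∀ u v, u ≠ v → ∃ w, G.Adj u w ∧ d w v < d u v) (u v : V) :
    ∃ p : G.Walk u v, p.length ≤ d u v := by
  induction h : d u v using Nat.strong_induction_on generalizing u with
  | _ m ih =>
    by_cases huv : u = v
    · subst huv
      exact ⟨.nil, Nat.zero_le _⟩
    obtain ⟨w, huw, hw⟩ := hstep u v huv
    obtain ⟨p, hp⟩ := ih _ (h ▸ hw) w rfl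
    exact ⟨.cons huw p, by rw [Walk.length_cons]; omega⟩

theorem preconnected_of_exists_adj_lt (hstep : ∀ u v, u ≠ v → ∃ w, G.Adj u w ∧ d w v < d u v) :
    G.Preconnected :=
  fun u v ↦ ⟨(exists_walk_length_le_of_exists_adj_lt hstep u v).choose⟩

theorem dist_eq_of_le_add_one_of_exists_adj_lt (hself : ∀ v, d v v = 0)
    (hadj : ∀ u w v, G.Adj u w → d u v ≤ d w v + 1)
    (hstep : ∀ u v, u ≠ v → ∃ w, G.Adj u w ∧ d w v < d u v) (u v : V) :
    G.dist u v = d u v := by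
  obtain ⟨p, hp⟩ := exists_walk_length_le_of_exists_adj_lt hstep u v
  obtain ⟨q, hq⟩ := Reachable.exists_walk_length_eq_dist ⟨p⟩
  exact le_antisymm ((dist_le p).trans hp) (hq ▸ le_length_of_le_add_one_of_adj hself hadj q)

theorem diam_eq_of_forall_dist_le (hG : G.Preconnected) {m : ℕ} (hle : ∀ u v, G.dist u v ≤ m)
    {u v : V} (huv : G.dist u v = m) : G.diam = m := by
  have hediam : G.ediam ≤ m :=
    ediam_le_of_edist_le fun a b ↦ (hG a b).coe_dist_eq_edist ▸ Nat.cast_le.2 (hle a b)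
  have hne : G.ediam ≠ ⊤ := ne_top_of_le_ne_top (ENat.natCast_ne_top m) hediam
  refine le_antisymm ?_ (huv ▸ dist_le_diam hne)
  exact (ENat.toNat_le_toNat hediam (ENat.natCast_ne_top m)).trans_eq (ENat.toNat_natCast m)

end SimpleGraph

namespace CS

def l1Dist {n : ℕ} (a b : CSVert n) : ℕ :=
  Nat.dist a.1.1 b.1.1 + Nat.dist a.1.2.1 b.1.2.1 + Nat.dist a.1.2.2 b.1.2.2

variable {n : ℕ}

theorem l1Dist_self (a : CSVert n) : l1Dist a a = 0 := by
  simp [l1Dist]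

theorem l1Dist_triangle (u v w : CSVert n) : l1Dist u w ≤ l1Dist u v + l1Dist v w := by
  have := Nat.dist.triangle_inequality u.1.1 v.1.1 w.1.1
  have := Nat.dist.triangle_inequality u.1.2.1 v.1.2.1 w.1.2.1
  have := Nat.dist.triangle_inequality u.1.2.2 v.1.2.2 w.1.2.2
  unfold l1Dist
  omega

theorem l1Dist_eq_one_of_adj {u w : CSVert n} (h : (CS n).Adj u w) : l1Dist u w = 1 := by
  obtain ⟨⟨i, j, k⟩, hu⟩ := u
  obtain ⟨⟨i', j', k'⟩, hw⟩ := w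
  change _ ∨ _ ∨ _ at h
  dsimp only at h
  unfold l1Dist Nat.dist
  dsimp only
  omega

/-- The order of the cases matters: first lower `k` and `j`, then move `i`; this keeps the
new vertex inside the staircase. -/
theorem exists_adj_l1Dist_lt {u v : CSVert n} (huv : u ≠ v) :
    ∃ w, (CS n).Adj u w ∧ l1Dist w v < l1Dist u v := by
  obtain ⟨⟨i, j, k⟩, hu⟩ := u
  obtain ⟨⟨i', j', k'⟩, hv⟩ := v
  simp only [ne_eq, Subtype.mk.injEq, Prod.mk.injEq] at huv
  dsimp only at hu hv
  unfold l1Dist Nat.dist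
  by_cases hk : k' < k
  · refine ⟨⟨(i, j, k - 1), ?_⟩, ?_, ?_⟩ <;> (try change _ ∨ _ ∨ _) <;> dsimp only <;> omega
  by_cases hj : j' < j
  · refine ⟨⟨(i, j - 1, k), ?_⟩, ?_, ?_⟩ <;> (try change _ ∨ _ ∨ _) <;> dsimp only <;> omega
  by_cases hi : i < i'
  · refine ⟨⟨(i + 1, j, k), ?_⟩, ?_, ?_⟩ <;> (try change _ ∨ _ ∨ _) <;> dsimp only <;> omega
  by_cases hi' : i' < i
  · refine ⟨⟨(i - 1, j, k), ?_⟩, ?_, ?_⟩ <;> (try change _ ∨ _ ∨ _) <;> dsimp only <;> omega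
  by_cases hj' : j < j'
  · refine ⟨⟨(i, j + 1, k), ?_⟩, ?_, ?_⟩ <;> (try change _ ∨ _ ∨ _) <;> dsimp only <;> omega
  · refine ⟨⟨(i, j, k + 1), ?_⟩, ?_, ?_⟩ <;> (try change _ ∨ _ ∨ _) <;> dsimp only <;> omega

theorem preconnected : (CS n).Preconnected :=
  preconnected_of_exists_adj_lt fun _ _ ↦ exists_adj_l1Dist_lt

theorem dist_eq_l1Dist (u v : CSVert n) : (CS n).dist u v = l1Dist u v :=
  dist_eq_of_le_add_one_of_exists_adj_lt l1Dist_self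
    (fun u w v h ↦ (l1Dist_triangle u w v).trans_eq (by rw [l1Dist_eq_one_of_adj h, add_comm]))
    (fun _ _ ↦ exists_adj_l1Dist_lt) u v

theorem l1Dist_le (u v : CSVert n) : l1Dist u v ≤ 3 * (n - 3) := by
  obtain ⟨⟨i, j, k⟩, hu⟩ := u
  obtain ⟨⟨i', j', k'⟩, hv⟩ := v
  dsimp only at hu hv
  unfold l1Dist Nat.dist
  dsimp only
  omega

theorem l1Dist_corners (hn : 4 ≤ n) :
    l1Dist (⟨(1, 1, n - 2), by dsimp only; omega⟩ : CSVert n)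
      ⟨(n - 2, n - 2, 1), by dsimp only; omega⟩ = 3 * (n - 3) := by
  unfold l1Dist Nat.dist
  dsimp only
  omega

end CS

theorem stmt7 {n : ℕ} (hn : 4 ≤ n) : (CS n).diam = 3 * (n - 3) :=
  SimpleGraph.diam_eq_of_forall_dist_le CS.preconnected
    (fun u v ↦ CS.dist_eq_l1Dist u v ▸ CS.l1Dist_le u v)
    ((CS.dist_eq_l1Dist _ _).trans (CS.l1Dist_corners hn))
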